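/- Let N ≥ 2, let A_1, …, A_N be d×d complex matrices, fix l ∈ {2, …, N} and an integer β ≥ 2, and set B = Σ_{i=1}^{l−1} A_i. For each integer α let F^{(α)} denote the coefficient of λ^α in the matrix polynomial (λ A_l + B)^{β−1} (so F^{(α)} = 0 unless 0 ≤ α ≤ β−1), and for j = 1, …, N define G^{(α)}_j = θ(l−j) F^{(α)} + δ_{jl} F^{(α−1)}. Then for every α ∈ {1, …, β} and every i ∈ {1, …, N}: [A_i, G^{(α−1)}_i] = Σ_{j,k=1}^N r_{ijk} [A_k, G^{(α)}_j] − (l−2) [A_i, G^{(α)}_i]. (This is the modified Lenard recursion P dH^{(α−1)}_{β,l} = (R − (l−2)P) dH^{(α)}_{β,l} for the Hamiltonians H^{(α)}_{β,l} = Tr of the coefficient of λ^α in (λA_l + B_l)^β, written out on gradients.) -/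

import Mathlib

/-- The discrete Heaviside function: `hv m = 1` if `m > 0`, else `0`. -/
def hv (m : ℤ) : ℤ := if 0 < m then 1 else 0

/-- The Kronecker delta. -/
def kd (i j : ℤ) : ℤ := if i = j then 1 else 0

/-- The structure constants of the bivector `R`:
`r_{ijk} = (k−1)δ_{ij}δ_{jk} − θ(i−k)δ_{ij} + θ(j−i)δ_{ik} + θ(i−j)δ_{jk}`. -/
def rco (i j k : ℤ) : ℤ :=
  (k - 1) * kd i j * kd j k - hv (i - k) * kd i j + hv (j - i) * kd i k + hv (i - j) * kd j k

/-- The commutator `[X, Y] = XY − YX`. -/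
def cm {R : Type*} [Ring R] (X Y : R) : R := X * Y - Y * X

/-- `coefF d A B e α` is the coefficient of `λ^α` in the matrix polynomial `(λA + B)^e`
(zero for `α < 0` or `α > e`). -/
noncomputable def coefF (d : ℕ) (A B : Matrix (Fin d) (Fin d) ℂ) (e : ℕ) (α : ℤ) :
    Matrix (Fin d) (Fin d) ℂ :=
  if 0 ≤ α then ((Polynomial.C A * Polynomial.X + Polynomial.C B) ^ e).coeff α.toNat else 0

/- ---------- auxiliary lemmas ---------- -/

lemma cm_zero {R : Type*} [Ring R] (X : R) : cm X 0 = 0 := by simp [cm]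

lemma cm_sum {R : Type*} [Ring R] {ι : Type*} (s : Finset ι) (f : ι → R) (Y : R) :
    cm (∑ x ∈ s, f x) Y = ∑ x ∈ s, cm (f x) Y := by
  simp [cm, Finset.sum_mul, Finset.mul_sum, Finset.sum_sub_distrib]

lemma kd_comm (a b : ℤ) : kd a b = kd b a := by
  unfold kd; by_cases h : a = b <;> simp [h, eq_comm]

lemma sum_kd_smul {M : Type*} [AddCommMonoid M] [Module ℂ M] {s : Finset ℕ} {t : ℕ}
    (ht : t ∈ s) (f : ℕ → M) :
    ∑ j ∈ s, ((kd (j : ℤ) (t : ℤ) : ℂ)) • f j = f t := by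
  rw [Finset.sum_eq_single_of_mem t ht]
  · simp [kd]
  · intro j _ hj
    have h : (j : ℤ) ≠ (t : ℤ) := by exact_mod_cast hj
    simp [kd, h]

lemma sum_hv_smul {M : Type*} [AddCommMonoid M] [Module ℂ M] {N i : ℕ} (hiN : i ≤ N)
    (f : ℕ → M) :
    ∑ k ∈ Finset.Ioc 0 N, ((hv ((i : ℤ) - (k : ℤ)) : ℂ)) • f k
      = ∑ k ∈ Finset.Ioc 0 (i - 1), f k := by
  have h1 : ∀ k ∈ Finset.Ioc 0 N, ((hv ((i : ℤ) - (k : ℤ)) : ℂ)) • f k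
      = if k < i then f k else 0 := by
    intro k _
    by_cases hk : k < i
    · rw [if_pos hk]; unfold hv; rw [if_pos (by omega)]; simp
    · rw [if_neg hk]; unfold hv; rw [if_neg (by omega)]; simp
  rw [Finset.sum_congr rfl h1, ← Finset.sum_filter]
  congr 1
  ext k
  simp only [Finset.mem_filter, Finset.mem_Ioc]
  omega

lemma rco_of_lt {i j : ℤ} (k : ℤ) (h : j < i) : rco i j k = kd j k := by
  have h1 : kd i j = 0 := by unfold kd; rw [if_neg (by omega)]
  have h2 : hv (j - i) = 0 := by unfold hv; rw [if_neg (by omega)]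
  have h3 : hv (i - j) = 1 := by unfold hv; rw [if_pos (by omega)]
  unfold rco; rw [h1, h2, h3]; ring

lemma rco_of_gt {i j : ℤ} (k : ℤ) (h : i < j) : rco i j k = kd i k := by
  have h1 : kd i j = 0 := by unfold kd; rw [if_neg (by omega)]
  have h2 : hv (j - i) = 1 := by unfold hv; rw [if_pos (by omega)]
  have h3 : hv (i - j) = 0 := by unfold hv; rw [if_neg (by omega)]
  unfold rco; rw [h1, h2, h3]; ring

lemma rco_diag (i k : ℤ) : rco i i k = (k - 1) * kd i k - hv (i - k) := by
  have h1 : kd i i = 1 := by unfold kd; rw [if_pos rfl]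
  have h2 : hv (i - i) = 0 := by unfold hv; rw [if_neg (by omega)]
  unfold rco; rw [h1, h2]; ring

lemma dsum {M : Type*} [AddCommGroup M] [Module ℂ M] (N i : ℕ) (h1 : 1 ≤ i) (h2 : i ≤ N)
    (c : ℕ → ℕ → M) :
    ∑ j ∈ Finset.Ioc 0 N, ∑ k ∈ Finset.Ioc 0 N,
        ((rco (i : ℤ) (j : ℤ) (k : ℤ) : ℂ)) • c k j
      = ((i : ℂ) - 1) • c i i - (∑ k ∈ Finset.Ioc 0 (i - 1), c k i)
        + (∑ j ∈ Finset.Ioc i N, c i j) + ∑ j ∈ Finset.Ioc 0 (i - 1), c j j := by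
  have hmem : ∀ t : ℕ, 1 ≤ t → t ≤ N → t ∈ Finset.Ioc 0 N := by
    intro t ht1 ht2; simp only [Finset.mem_Ioc]; omega
  set f : ℕ → M := fun j => ∑ k ∈ Finset.Ioc 0 N,
      ((rco (i : ℤ) (j : ℤ) (k : ℤ) : ℂ)) • c k j with hf
  have split2 := Finset.sum_Ioc_consecutive f (show i - 1 ≤ i by omega) h2
  have split1 := Finset.sum_Ioc_consecutive f (show 0 ≤ i - 1 by omega)
    (show i - 1 ≤ N by omega)
  have hsing : Finset.Ioc (i - 1) i = {i} := by
    ext x; simp only [Finset.mem_Ioc, Finset.mem_singleton]; omega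
  have hA : ∀ j ∈ Finset.Ioc 0 (i - 1), f j = c j j := by
    intro j hj
    simp only [Finset.mem_Ioc] at hj
    have hterm : ∀ k ∈ Finset.Ioc 0 N, ((rco (i : ℤ) (j : ℤ) (k : ℤ) : ℂ)) • c k j
        = ((kd (k : ℤ) (j : ℤ) : ℂ)) • c k j := by
      intro k _
      rw [rco_of_lt _ (by omega : (j : ℤ) < (i : ℤ)), kd_comm]
    show (∑ k ∈ Finset.Ioc 0 N, ((rco (i : ℤ) (j : ℤ) (k : ℤ) : ℂ)) • c k j) = c j j
    rw [Finset.sum_congr rfl hterm, sum_kd_smul (hmem j (by omega) (by omega))]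
  have hC : ∀ j ∈ Finset.Ioc i N, f j = c i j := by
    intro j hj
    simp only [Finset.mem_Ioc] at hj
    have hterm : ∀ k ∈ Finset.Ioc 0 N, ((rco (i : ℤ) (j : ℤ) (k : ℤ) : ℂ)) • c k j
        = ((kd (k : ℤ) (i : ℤ) : ℂ)) • c k j := by
      intro k _
      rw [rco_of_gt _ (by omega : (i : ℤ) < (j : ℤ)), kd_comm]
    show (∑ k ∈ Finset.Ioc 0 N, ((rco (i : ℤ) (j : ℤ) (k : ℤ) : ℂ)) • c k j) = c i j
    rw [Finset.sum_congr rfl hterm, sum_kd_smul (hmem i h1 h2)]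
  have hBmid : f i = ((i : ℂ) - 1) • c i i - ∑ k ∈ Finset.Ioc 0 (i - 1), c k i := by
    have hterm : ∀ k ∈ Finset.Ioc 0 N, ((rco (i : ℤ) (i : ℤ) (k : ℤ) : ℂ)) • c k i
        = ((kd (k : ℤ) (i : ℤ) : ℂ)) • (((k : ℂ) - 1) • c k i)
          - ((hv ((i : ℤ) - (k : ℤ)) : ℂ)) • c k i := by
      intro k _
      rw [rco_diag]
      have hc : ((((k : ℤ) - 1) * kd (i : ℤ) (k : ℤ) - hv ((i : ℤ) - (k : ℤ)) : ℤ) : ℂ)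
          = (kd (k : ℤ) (i : ℤ) : ℂ) * ((k : ℂ) - 1) - (hv ((i : ℤ) - (k : ℤ)) : ℂ) := by
        rw [kd_comm]; push_cast; ring
      rw [hc, sub_smul, mul_smul]
    show (∑ k ∈ Finset.Ioc 0 N, ((rco (i : ℤ) (i : ℤ) (k : ℤ) : ℂ)) • c k i)
      = ((i : ℂ) - 1) • c i i - ∑ k ∈ Finset.Ioc 0 (i - 1), c k i
    rw [Finset.sum_congr rfl hterm, Finset.sum_sub_distrib,
      sum_kd_smul (hmem i h1 h2) (fun k => ((k : ℂ) - 1) • c k i), sum_hv_smul h2]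
  calc ∑ j ∈ Finset.Ioc 0 N, f j
      = (∑ j ∈ Finset.Ioc 0 (i - 1), f j) + ((∑ j ∈ Finset.Ioc (i - 1) i, f j)
          + ∑ j ∈ Finset.Ioc i N, f j) := by rw [split2, split1]
    _ = (∑ j ∈ Finset.Ioc 0 (i - 1), c j j)
          + ((((i : ℂ) - 1) • c i i - ∑ k ∈ Finset.Ioc 0 (i - 1), c k i)
            + ∑ j ∈ Finset.Ioc i N, c i j) := by
        rw [Finset.sum_congr rfl hA, Finset.sum_congr rfl hC, hsing,
          Finset.sum_singleton, hBmid]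
    _ = _ := by abel

lemma keyF (d : ℕ) (A B : Matrix (Fin d) (Fin d) ℂ) (e : ℕ) (γ : ℤ) :
    cm A (coefF d A B e (γ - 1)) + cm B (coefF d A B e γ) = 0 := by
  have hMP : (Polynomial.C A * Polynomial.X + Polynomial.C B) *
      (Polynomial.C A * Polynomial.X + Polynomial.C B) ^ e
      = (Polynomial.C A * Polynomial.X + Polynomial.C B) ^ e *
        (Polynomial.C A * Polynomial.X + Polynomial.C B) := by
    rw [← pow_succ', ← pow_succ]
  rcases lt_trichotomy γ 0 with hγ | rfl | hγ
  · simp only [coefF]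
    rw [if_neg (by omega : ¬ (0 : ℤ) ≤ γ - 1), if_neg (by omega : ¬ (0 : ℤ) ≤ γ),
      cm_zero, cm_zero, add_zero]
  · simp only [coefF]
    rw [if_neg (by omega : ¬ (0 : ℤ) ≤ (0 : ℤ) - 1), if_pos le_rfl, cm_zero, zero_add]
    have h0 := congrArg (fun q : Polynomial (Matrix (Fin d) (Fin d) ℂ) => q.coeff 0) hMP
    simp only [Polynomial.mul_coeff_zero, Polynomial.coeff_add, Polynomial.coeff_C_zero,
      Polynomial.coeff_X_zero, mul_zero, zero_add] at h0
    rw [Int.toNat_zero, cm]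
    exact sub_eq_zero_of_eq h0
  · obtain ⟨n, rfl⟩ : ∃ n : ℕ, γ = (n : ℤ) + 1 := ⟨(γ - 1).toNat, by omega⟩
    simp only [coefF]
    rw [if_pos (by omega : (0 : ℤ) ≤ (n : ℤ) + 1 - 1), if_pos (by omega : (0 : ℤ) ≤ (n : ℤ) + 1)]
    have ht1 : ((n : ℤ) + 1 - 1).toNat = n := by omega
    have ht2 : ((n : ℤ) + 1).toNat = n + 1 := by omega
    rw [ht1, ht2]
    set P := (Polynomial.C A * Polynomial.X + Polynomial.C B) ^ e with hP
    have hL : ((Polynomial.C A * Polynomial.X + Polynomial.C B) * P).coeff (n + 1)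
        = A * P.coeff n + B * P.coeff (n + 1) := by
      rw [add_mul, Polynomial.coeff_add, mul_assoc, Polynomial.coeff_C_mul,
        Polynomial.coeff_X_mul, Polynomial.coeff_C_mul]
    have hR : (P * (Polynomial.C A * Polynomial.X + Polynomial.C B)).coeff (n + 1)
        = P.coeff n * A + P.coeff (n + 1) * B := by
      rw [mul_add, Polynomial.coeff_add, ← mul_assoc, Polynomial.coeff_mul_X,
        Polynomial.coeff_mul_C, Polynomial.coeff_mul_C]
    have hco : A * P.coeff n + B * P.coeff (n + 1)
        = P.coeff n * A + P.coeff (n + 1) * B := by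
      rw [← hL, ← hR, hMP]
    simp only [cm]
    have hre : (A * P.coeff n - P.coeff n * A) + (B * P.coeff (n + 1) - P.coeff (n + 1) * B)
        = (A * P.coeff n + B * P.coeff (n + 1)) - (P.coeff n * A + P.coeff (n + 1) * B) := by
      abel
    rw [hre, hco, sub_self]

/-- The modified Lenard recursion `P dH^{(α−1)}_{β,l} = (R − (l−2)P) dH^{(α)}_{β,l}`,
written out on gradients: with `B = Σ_{i=1}^{l−1} A_i`, `F^{(α)}` the coefficient of `λ^α`
in `(λ A_l + B)^{β−1}`, and `G^{(α)}_j = θ(l−j) F^{(α)} + δ_{jl} F^{(α−1)}`, one has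
`[A_i, G^{(α−1)}_i] = Σ_{j,k} r_{ijk} [A_k, G^{(α)}_j] − (l−2) [A_i, G^{(α)}_i]`
for every `α ∈ {1, …, β}` and `i ∈ {1, …, N}`. -/
theorem stmt11 (N d : ℕ) (hN : 2 ≤ N) (A : ℕ → Matrix (Fin d) (Fin d) ℂ)
    (l : ℕ) (hl : l ∈ Finset.Icc 2 N) (β : ℕ) (hβ : 2 ≤ β)
    (B : Matrix (Fin d) (Fin d) ℂ) (hB : B = ∑ i ∈ Finset.Icc 1 (l - 1), A i)
    (G : ℕ → ℤ → Matrix (Fin d) (Fin d) ℂ)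
    (hG : ∀ (j : ℕ) (α : ℤ), G j α =
      ((hv ((l : ℤ) - (j : ℤ)) : ℤ) : ℂ) • coefF d (A l) B (β - 1) α
        + ((kd (j : ℤ) (l : ℤ) : ℤ) : ℂ) • coefF d (A l) B (β - 1) (α - 1)) :
    ∀ α : ℤ, 1 ≤ α → α ≤ (β : ℤ) → ∀ i ∈ Finset.Icc 1 N,
      cm (A i) (G i (α - 1)) =
        (∑ j ∈ Finset.Icc 1 N, ∑ k ∈ Finset.Icc 1 N,
            ((rco (i : ℤ) (j : ℤ) (k : ℤ) : ℤ) : ℂ) • cm (A k) (G j α))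
          - ((l : ℂ) - 2) • cm (A i) (G i α) := by
  intro α hα1 hα2 i hi
  rw [Finset.mem_Icc] at hi hl
  obtain ⟨hl2, hlN⟩ := hl
  obtain ⟨hi1, hiN⟩ := hi
  set F : ℤ → Matrix (Fin d) (Fin d) ℂ := coefF d (A l) B (β - 1) with hF
  have key : ∀ γ : ℤ, cm (A l) (F (γ - 1)) + cm B (F γ) = 0 := fun γ => keyF d (A l) B (β - 1) γ
  have hGlt : ∀ j, j < l → ∀ γ : ℤ, G j γ = F γ := by
    intro j hj γ
    rw [hG]
    have e1 : hv ((l : ℤ) - (j : ℤ)) = 1 := by unfold hv; rw [if_pos (by omega)]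
    have e2 : kd (j : ℤ) (l : ℤ) = 0 := by unfold kd; rw [if_neg (by omega)]
    rw [e1, e2]
    simp
  have hGeq : ∀ γ : ℤ, G l γ = F (γ - 1) := by
    intro γ
    rw [hG]
    have e1 : hv ((l : ℤ) - (l : ℤ)) = 0 := by unfold hv; rw [if_neg (by omega)]
    have e2 : kd (l : ℤ) (l : ℤ) = 1 := by unfold kd; rw [if_pos rfl]
    rw [e1, e2]
    simp
  have hGgt : ∀ j, l < j → ∀ γ : ℤ, G j γ = 0 := by
    intro j hj γ
    rw [hG]
    have e1 : hv ((l : ℤ) - (j : ℤ)) = 0 := by unfold hv; rw [if_neg (by omega)]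
    have e2 : kd (j : ℤ) (l : ℤ) = 0 := by unfold kd; rw [if_neg (by omega)]
    rw [e1, e2]
    simp
  have hIN : Finset.Icc 1 N = Finset.Ioc 0 N := by
    ext x; simp only [Finset.mem_Icc, Finset.mem_Ioc]; omega
  have hIl : Finset.Icc 1 (l - 1) = Finset.Ioc 0 (l - 1) := by
    ext x; simp only [Finset.mem_Icc, Finset.mem_Ioc]; omega
  rw [hIN, dsum N i hi1 hiN (fun k j => cm (A k) (G j α))]
  rcases lt_trichotomy i l with hil | heq | hil
  · -- case i < l
    simp only [hGlt i hil]
    have hsum4 : ∑ j ∈ Finset.Ioc 0 (i - 1), cm (A j) (G j α)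
        = ∑ j ∈ Finset.Ioc 0 (i - 1), cm (A j) (F α) := by
      refine Finset.sum_congr rfl fun j hj => ?_
      simp only [Finset.mem_Ioc] at hj
      rw [hGlt j (by omega)]
    have hsum3 : ∑ j ∈ Finset.Ioc i N, cm (A i) (G j α)
        = ((l : ℂ) - 1 - (i : ℂ)) • cm (A i) (F α) + cm (A i) (F (α - 1)) := by
      rw [← Finset.sum_Ioc_consecutive _ (show i ≤ l - 1 by omega) (show l - 1 ≤ N by omega)]
      congr 1
      · have hcg : ∀ j ∈ Finset.Ioc i (l - 1), cm (A i) (G j α) = cm (A i) (F α) := by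
          intro j hj
          simp only [Finset.mem_Ioc] at hj
          rw [hGlt j (by omega)]
        rw [Finset.sum_congr rfl hcg, Finset.sum_const, Nat.card_Ioc,
          ← Nat.cast_smul_eq_nsmul ℂ]
        congr 1
        have hz : ((l - 1 - i : ℕ) : ℤ) = (l : ℤ) - 1 - (i : ℤ) := by omega
        calc ((l - 1 - i : ℕ) : ℂ) = (((l - 1 - i : ℕ) : ℤ) : ℂ) := by norm_cast
          _ = (l : ℂ) - 1 - (i : ℂ) := by rw [hz]; push_cast; ring
      · rw [Finset.sum_eq_single_of_mem l (by simp only [Finset.mem_Ioc]; omega)]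
        · rw [hGeq]
        · intro j hj hne
          simp only [Finset.mem_Ioc] at hj
          rw [hGgt j (by omega), cm_zero]
    rw [hsum3, hsum4]
    module
  · -- case i = l
    subst heq
    simp only [hGeq]
    have hsum2 : ∑ k ∈ Finset.Ioc 0 (i - 1), cm (A k) (F (α - 1)) = cm B (F (α - 1)) := by
      rw [hB, hIl, cm_sum]
    have hsum3 : ∑ j ∈ Finset.Ioc i N, cm (A i) (G j α) = 0 := by
      refine Finset.sum_eq_zero fun j hj => ?_
      simp only [Finset.mem_Ioc] at hj
      rw [hGgt j (by omega), cm_zero]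
    have hsum4 : ∑ j ∈ Finset.Ioc 0 (i - 1), cm (A j) (G j α) = cm B (F α) := by
      have hcg : ∀ j ∈ Finset.Ioc 0 (i - 1), cm (A j) (G j α) = cm (A j) (F α) := by
        intro j hj
        simp only [Finset.mem_Ioc] at hj
        rw [hGlt j (by omega)]
      rw [Finset.sum_congr rfl hcg, hB, hIl, cm_sum]
    rw [hsum2, hsum3, hsum4]
    have hK1 : cm B (F α) = -cm (A i) (F (α - 1)) := eq_neg_of_add_eq_zero_left (by rw [add_comm]; exact key α)
    have hK2 : cm B (F (α - 1)) = -cm (A i) (F (α - 1 - 1)) :=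
      eq_neg_of_add_eq_zero_left (by rw [add_comm]; exact key (α - 1))
    rw [hK1, hK2]
    module
  · -- case l < i
    simp only [hGgt i hil, cm_zero, smul_zero, Finset.sum_const_zero]
    have hsum3 : ∑ j ∈ Finset.Ioc i N, cm (A i) (G j α) = 0 := by
      refine Finset.sum_eq_zero fun j hj => ?_
      simp only [Finset.mem_Ioc] at hj
      rw [hGgt j (by omega), cm_zero]
    have hsum4 : ∑ j ∈ Finset.Ioc 0 (i - 1), cm (A j) (G j α)
        = cm B (F α) + cm (A l) (F (α - 1)) := by
      rw [← Finset.sum_Ioc_consecutive _ (show 0 ≤ l - 1 by omega) (show l - 1 ≤ i - 1 by omega)]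
      congr 1
      · have hcg : ∀ j ∈ Finset.Ioc 0 (l - 1), cm (A j) (G j α) = cm (A j) (F α) := by
          intro j hj
          simp only [Finset.mem_Ioc] at hj
          rw [hGlt j (by omega)]
        rw [Finset.sum_congr rfl hcg, hB, hIl, cm_sum]
      · rw [Finset.sum_eq_single_of_mem l (by simp only [Finset.mem_Ioc]; omega)]
        · rw [hGeq]
        · intro j hj hne
          simp only [Finset.mem_Ioc] at hj
          rw [hGgt j (by omega), cm_zero]
    rw [hsum3, hsum4]
    have hK1 : cm B (F α) + cm (A l) (F (α - 1)) = 0 := by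
      rw [add_comm]; exact key α
    rw [hK1]
    simp
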